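/- Convexity bound on accessible information: With the ensemble and notation of the previous statement, the accessible information satisfies I_acc(E) ≤ log₂ N − min_{|Φ⟩} H[Q(Φ)], where the minimum is over all unit vectors |Φ⟩ ∈ C^N. -/

import Mathlib

/-!
Write the joint law as `p(m,i) = w_i · Q(Φ_i)(m)` with `w_i = μ_i / N`. Since
`η(ab) = a η(b) + b η(a)` and each `Q(Φ_i)` is a probability vector, the mutual information
equals `H(M) − Σ_i w_i H[Q(Φ_i)]`. Completeness of the POVM, applied to the unit vectors
`Ψ_{mk}`, makes the message marginal uniform, so `H(M) = log₂ N`; its trace gives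
`Σ_i μ_i = N`, so the `w_i` are convex weights and the average entropy is at least the infimum
over all unit vectors.
-/

open Finset Matrix

/-- `η(x) = −x log₂ x`. -/
noncomputable def eta2 (x : ℝ) : ℝ := -x * Real.logb 2 x

lemma eta2_mul (a b : ℝ) : eta2 (a * b) = a * eta2 b + b * eta2 a := by
  rcases eq_or_ne a 0 with rfl | ha
  · simp [eta2]
  rcases eq_or_ne b 0 with rfl | hb
  · simp [eta2]
  simp only [eta2, Real.logb_mul ha hb]
  ring

lemma eta2_nonneg {x : ℝ} (h0 : 0 ≤ x) (h1 : x ≤ 1) : 0 ≤ eta2 x := by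
  rw [eta2, neg_mul, neg_nonneg]
  exact mul_nonpos_of_nonneg_of_nonpos h0 (Real.logb_nonpos one_lt_two h0 h1)

lemma mul_eta2_inv (x : ℝ) : x * eta2 x⁻¹ = Real.logb 2 x := by
  rcases eq_or_ne x 0 with rfl | hx
  · simp
  rw [eta2, Real.logb_inv]
  field_simp

section Entropy

variable {α ι : Type*} [Fintype α] [Fintype ι]

lemma sum_eta2_nonneg {q : α → ℝ} (hq0 : ∀ m, 0 ≤ q m) (hq1 : ∑ m, q m = 1) :
    0 ≤ ∑ m, eta2 (q m) :=
  sum_nonneg fun m _ => eta2_nonneg (hq0 m) (hq1 ▸ single_le_sum (fun m _ => hq0 m) (mem_univ m))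

lemma sum_eta2_mul_of_sum_eq_one (a : ℝ) {q : α → ℝ} (hq : ∑ m, q m = 1) :
    ∑ m, eta2 (a * q m) = a * ∑ m, eta2 (q m) + eta2 a := by
  simp only [eta2_mul, sum_add_distrib, ← mul_sum, ← sum_mul, hq, one_mul]

lemma mutualInfo_mixture_eq (w : ι → ℝ) {q : ι → α → ℝ} (hq : ∀ i, ∑ m, q i m = 1) :
    (∑ m, eta2 (∑ i, w i * q i m)) + (∑ i, eta2 (∑ m, w i * q i m))
        - ∑ m, ∑ i, eta2 (w i * q i m)
      = ∑ m, eta2 (∑ i, w i * q i m) - ∑ i, w i * ∑ m, eta2 (q i m) := by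
  simp only [← mul_sum, hq, mul_one]
  rw [sum_comm, sum_congr rfl fun i _ => sum_eta2_mul_of_sum_eq_one (w i) (hq i),
    sum_add_distrib]
  ring

lemma csInf_le_sum_mul {S : Set ℝ} (hS : BddBelow S)
    {w f : ι → ℝ} (hw0 : ∀ i, 0 ≤ w i) (hw1 : ∑ i, w i = 1) (hf : ∀ i, f i ∈ S) :
    sInf S ≤ ∑ i, w i * f i :=
  calc sInf S = ∑ i, w i * sInf S := by rw [← sum_mul, hw1, one_mul]
    _ ≤ ∑ i, w i * f i :=
      sum_le_sum fun i _ => mul_le_mul_of_nonneg_left (csInf_le hS (hf i)) (hw0 i)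

end Entropy

section Frames

variable {n ι : Type*} [Fintype n] [Fintype ι]

lemma norm_sum_star_mul_comm (x y : n → ℂ) :
    ‖∑ w, star (x w) * y w‖ = ‖∑ w, star (y w) * x w‖ := by
  rw [← norm_star, star_sum]
  simp only [star_mul', star_star, mul_comm]

lemma sum_mul_star_eq_ite_of_orthonormal [DecidableEq n] {v : n → n → ℂ}
    (hv : ∀ m m', ∑ w, star (v m w) * v m' w = if m = m' then 1 else 0) (a b : n) :
    ∑ m, v m a * star (v m b) = if a = b then 1 else 0 := by
  let B : Matrix n n ℂ := Matrix.of fun w m => v m w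
  have hBB : Bᴴ * B = 1 := by
    ext m m'
    simpa [B, Matrix.mul_apply, Matrix.one_apply] using hv m m'
  simpa [B, Matrix.mul_apply, Matrix.one_apply, mul_comm] using
    congrFun₂ (mul_eq_one_comm.mp hBB : B * Bᴴ = 1) a b

lemma sum_mul_sq_norm_of_resolution [DecidableEq n] {c : ι → ℝ} {Φ : ι → n → ℂ}
    (hΦ : ∀ a b, ∑ i, (c i : ℂ) * (Φ i a * star (Φ i b)) = if a = b then 1 else 0)
    (v : n → ℂ) :
    ∑ i, c i * ‖∑ w, star (v w) * Φ i w‖ ^ 2 = ∑ w, ‖v w‖ ^ 2 := by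
  apply Complex.ofReal_injective
  push_cast
  simp only [← Complex.mul_conj', ← Complex.star_def, star_sum, star_mul', star_star]
  calc ∑ i, (c i : ℂ) * ((∑ a, star (v a) * Φ i a) * ∑ b, v b * star (Φ i b))
      = ∑ a, ∑ b, star (v a) * v b * ∑ i, (c i : ℂ) * (Φ i a * star (Φ i b)) := by
        simp only [sum_mul_sum]
        simp only [mul_sum]
        rw [sum_comm]
        refine sum_congr rfl fun a _ => ?_
        rw [sum_comm]
        exact sum_congr rfl fun b _ => sum_congr rfl fun i _ => by ring
    _ = ∑ a, v a * star (v a) := by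
        simp only [hΦ, mul_ite, mul_one, mul_zero, sum_ite_eq, mem_univ, if_true]
        exact sum_congr rfl fun a _ => mul_comm _ _

lemma ofReal_sum_sq_norm (x : n → ℂ) :
    ((∑ w, ‖x w‖ ^ 2 : ℝ) : ℂ) = ∑ w, star (x w) * x w := by
  push_cast
  simp only [Complex.star_def, Complex.conj_mul']

lemma sum_eq_card_of_resolution [DecidableEq n] {c : ι → ℝ} {Φ : ι → n → ℂ}
    (hΦ : ∀ a b, ∑ i, (c i : ℂ) * (Φ i a * star (Φ i b)) = if a = b then 1 else 0)
    (hunit : ∀ i, ∑ w, ‖Φ i w‖ ^ 2 = 1) :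
    ∑ i, c i = Fintype.card n := by
  have hdiag (a : n) : ∑ i, c i * ‖Φ i a‖ ^ 2 = 1 := by
    simpa [Pi.single_apply, apply_ite] using sum_mul_sq_norm_of_resolution hΦ (Pi.single a 1)
  calc ∑ i, c i = ∑ i, c i * ∑ a, ‖Φ i a‖ ^ 2 := by simp only [hunit, mul_one]
    _ = ∑ a : n, ∑ i, c i * ‖Φ i a‖ ^ 2 := by simp only [mul_sum]; exact sum_comm
    _ = Fintype.card n := by simp [hdiag]

end Frames

section Overlap

variable {n κ ι : Type*} [Fintype n] [Fintype κ] [Fintype ι]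

/-- `overlapDist Ψ φ m = ⟨φ|ρ_m|φ⟩` for the message states `ρ_m = (1/K) Σ_k |Ψ_{mk}⟩⟨Ψ_{mk}|`. -/
noncomputable def overlapDist (Ψ : n → κ → n → ℂ) (φ : n → ℂ) (m : n) : ℝ :=
  (Fintype.card κ : ℝ)⁻¹ * ∑ k, ‖∑ w, star (φ w) * Ψ m k w‖ ^ 2

lemma overlapDist_nonneg (Ψ : n → κ → n → ℂ) (φ : n → ℂ) (m : n) : 0 ≤ overlapDist Ψ φ m := by
  unfold overlapDist
  positivity

lemma sum_overlapDist [DecidableEq n] [Nonempty κ] {Ψ : n → κ → n → ℂ}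
    (hΨ : ∀ k m m', ∑ w, star (Ψ m k w) * Ψ m' k w = if m = m' then 1 else 0)
    {φ : n → ℂ} (hφ : ∑ w, ‖φ w‖ ^ 2 = 1) :
    ∑ m, overlapDist Ψ φ m = 1 := by
  have hparseval (k : κ) : ∑ m, ‖∑ w, star (φ w) * Ψ m k w‖ ^ 2 = 1 := by
    simpa [hφ] using sum_mul_sq_norm_of_resolution (c := fun _ => 1) (Φ := fun m => Ψ m k)
      (by simpa using sum_mul_star_eq_ite_of_orthonormal (hΨ k)) φ
  simp only [overlapDist, ← mul_sum]
  rw [sum_comm]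
  simp only [hparseval, sum_const, card_univ, nsmul_eq_mul, mul_one]
  exact inv_mul_cancel₀ (Nat.cast_ne_zero.2 Fintype.card_ne_zero)

lemma sum_mul_overlapDist [DecidableEq n] [Nonempty κ] {Ψ : n → κ → n → ℂ}
    (hΨ : ∀ k m m', ∑ w, star (Ψ m k w) * Ψ m' k w = if m = m' then 1 else 0)
    {μ : ι → ℝ} {Φ : ι → n → ℂ}
    (hΦ : ∀ a b, ∑ i, (μ i : ℂ) * (Φ i a * star (Φ i b)) = if a = b then 1 else 0) (m : n) :
    ∑ i, μ i * overlapDist Ψ (Φ i) m = 1 := by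
  have hnorm (k : κ) : ∑ w, ‖Ψ m k w‖ ^ 2 = 1 := by
    apply Complex.ofReal_injective
    rw [ofReal_sum_sq_norm, hΨ, if_pos rfl, Complex.ofReal_one]
  have hframe (k : κ) : ∑ i, μ i * ‖∑ w, star (Φ i w) * Ψ m k w‖ ^ 2 = 1 := by
    simp only [norm_sum_star_mul_comm (Φ _)]
    rw [sum_mul_sq_norm_of_resolution hΦ, hnorm]
  simp only [overlapDist, mul_sum, mul_left_comm (μ _)]
  rw [sum_comm]
  simp only [← mul_sum, hframe, sum_const, card_univ, nsmul_eq_mul, mul_one]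
  exact mul_inv_cancel₀ (Nat.cast_ne_zero.2 Fintype.card_ne_zero)

lemma bddBelow_sum_eta2_overlapDist [DecidableEq n] [Nonempty κ] {Ψ : n → κ → n → ℂ}
    (hΨ : ∀ k m m', ∑ w, star (Ψ m k w) * Ψ m' k w = if m = m' then 1 else 0) :
    BddBelow {x : ℝ | ∃ φ : n → ℂ, (∑ w, ‖φ w‖ ^ 2 = 1) ∧ x = ∑ m, eta2 (overlapDist Ψ φ m)} :=
  ⟨0, by
    rintro _ ⟨φ, hφ, rfl⟩
    exact sum_eta2_nonneg (overlapDist_nonneg Ψ φ) (sum_overlapDist hΨ hφ)⟩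

end Overlap

/-- convexity bound on the accessible information: with the uniform
ensemble `{1/N, ρ_m}`, `ρ_m = (1/K)Σ_k |Ψ_{mk}⟩⟨Ψ_{mk}|`, the mutual information of any
rank-one POVM measurement is at most `log₂ N − min_{|Φ⟩} H[Q(Φ)]`; hence the accessible
information obeys `I_acc(E) ≤ log₂ N − min_{|Φ⟩} H[Q(Φ)]`. -/
theorem stmt15 (N K : ℕ) (hN : 0 < N) (hK : 0 < K)
    (Ψ : Fin N → Fin K → (Fin N → ℂ))
    (hONB : ∀ k (m m' : Fin N),
      (∑ i, star (Ψ m k i) * Ψ m' k i) = if m = m' then 1 else 0)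
    {ι : Type*} [Fintype ι] (μ : ι → ℝ) (Φ : ι → (Fin N → ℂ))
    (hμ : ∀ i, 0 < μ i)
    (hunit : ∀ i, ∑ w, ‖Φ i w‖ ^ 2 = 1)
    (hPOVM : ∀ a b : Fin N,
      ∑ i, (μ i : ℂ) * (Φ i a * star (Φ i b)) = if a = b then 1 else 0)
    (Q : (Fin N → ℂ) → Fin N → ℝ)
    (hQ : ∀ φ m, Q φ m = (K : ℝ)⁻¹ * ∑ k, ‖∑ w, star (φ w) * Ψ m k w‖ ^ 2)
    (p : Fin N → ι → ℝ)
    (hp : ∀ m i, p m i = (N : ℝ)⁻¹ * (μ i * Q (Φ i) m)) :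
    (∑ m, eta2 (∑ i, p m i)) + (∑ i, eta2 (∑ m, p m i)) - (∑ m, ∑ i, eta2 (p m i))
      ≤ Real.logb 2 N
        - sInf {x : ℝ | ∃ φ : Fin N → ℂ, (∑ w, ‖φ w‖ ^ 2 = 1) ∧
            x = ∑ m, eta2 (Q φ m)} := by
  have : NeZero K := ⟨hK.ne'⟩
  obtain rfl : Q = overlapDist Ψ := by
    funext φ m
    simp [hQ, overlapDist]
  obtain rfl : p = fun m i => ((N : ℝ)⁻¹ * μ i) * overlapDist Ψ (Φ i) m := by
    funext m i
    rw [hp, mul_assoc]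
  have hrow (m : Fin N) : ∑ i, (N : ℝ)⁻¹ * μ i * overlapDist Ψ (Φ i) m = (N : ℝ)⁻¹ := by
    simp only [mul_assoc, ← mul_sum, sum_mul_overlapDist hONB hPOVM m, mul_one]
  have hweights : ∑ i, (N : ℝ)⁻¹ * μ i = 1 := by
    rw [← mul_sum, sum_eq_card_of_resolution hPOVM hunit, Fintype.card_fin]
    exact inv_mul_cancel₀ (Nat.cast_ne_zero.2 hN.ne')
  rw [mutualInfo_mixture_eq _ fun i => sum_overlapDist hONB (hunit i)]
  simp only [hrow, sum_const, card_univ, Fintype.card_fin, nsmul_eq_mul, mul_eta2_inv]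
  gcongr
  exact csInf_le_sum_mul (bddBelow_sum_eta2_overlapDist hONB)
    (fun i => mul_nonneg (by positivity) (hμ i).le) hweights fun i => ⟨Φ i, hunit i, rfl⟩
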